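/- arXiv:1105.3643 — 3 statements merged into one kernel-verified Lean document; each statement's English description precedes it below -/
import Mathlib

section
/- Let m ≥ 2 and let u, w : Fin m → ℂ² be families of vectors such that the pure tensors U = u_0 ⊗ ⋯ ⊗ u_{m−1} and W = w_0 ⊗ ⋯ ⊗ w_{m−1} in ⨂^m ℂ² are linearly independent, and suppose that for all scalars a, b ∈ ℂ the tensor aU + bW is decomposable. Then there exists an index j₀ ∈ Fin m such that for every j ≠ j₀ the vectors u_j and w_j are linearly dependent. -/
open scoped TensorProduct

/-- The `m`-fold tensor product of `ℂ²`, the affine cone over the Segre embedding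
of `(ℙ¹)^m`. -/
abbrev BinTensor (m : ℕ) := ⨂[ℂ] _ : Fin m, (Fin 2 → ℂ)

/-- A tensor is decomposable if it is a pure tensor `w 0 ⊗ ⋯ ⊗ w (m-1)`. -/
def Decomposable {m : ℕ} (t : BinTensor m) : Prop :=
  ∃ w : Fin m → Fin 2 → ℂ, t = ⨂ₜ[ℂ] j, w j

/-- For two nonzero vectors there is a functional nonvanishing on both. -/
lemma exists_dual_ne_zero (x y : Fin 2 → ℂ) (hx : x ≠ 0) (hy : y ≠ 0) :
    ∃ f : (Fin 2 → ℂ) →ₗ[ℂ] ℂ, f x ≠ 0 ∧ f y ≠ 0 := by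
  have hfx : ∃ f : Module.Dual ℂ (Fin 2 → ℂ), f x ≠ 0 := by
    by_contra h
    push_neg at h
    exact hx ((Module.forall_dual_apply_eq_zero_iff ℂ x).1 h)
  have hgy : ∃ g : Module.Dual ℂ (Fin 2 → ℂ), g y ≠ 0 := by
    by_contra h
    push_neg at h
    exact hy ((Module.forall_dual_apply_eq_zero_iff ℂ y).1 h)
  obtain ⟨f, hf⟩ := hfx
  obtain ⟨g, hg⟩ := hgy
  by_cases hfy : f y = 0
  · by_cases hgx : g x = 0
    · exact ⟨f + g, by simp [hf, hgx], by simp [hg, hfy]⟩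
    · exact ⟨g, hgx, hg⟩
  · exact ⟨f, hf, hfy⟩

/-- The scalar multilinear contraction of a tensor by a family of functionals. -/
noncomputable def contract {m : ℕ} (F : ∀ _ : Fin m, (Fin 2 → ℂ) →ₗ[ℂ] ℂ) :
    BinTensor m →ₗ[ℂ] ℂ :=
  PiTensorProduct.lift ((MultilinearMap.mkPiAlgebra ℂ (Fin m) ℂ).compLinearMap F)

lemma contract_tprod {m : ℕ} (F : ∀ _ : Fin m, (Fin 2 → ℂ) →ₗ[ℂ] ℂ)
    (v : Fin m → Fin 2 → ℂ) :
    contract F (⨂ₜ[ℂ] j, v j) = ∏ j, F j (v j) := by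
  simp [contract]

/-- Key step: if the two factor pairs at distinct indices `j₁, j₂` are each linearly
independent, then `U + W` is not decomposable. -/
lemma key {m : ℕ} (u w : Fin m → Fin 2 → ℂ) (j₁ j₂ : Fin m) (hne : j₁ ≠ j₂)
    (hu : ∀ j, u j ≠ 0) (hw : ∀ j, w j ≠ 0)
    (h1 : LinearIndependent ℂ ![u j₁, w j₁])
    (h2 : LinearIndependent ℂ ![u j₂, w j₂])
    (hdec : Decomposable ((⨂ₜ[ℂ] j, u j : BinTensor m) + ⨂ₜ[ℂ] j, w j)) : False := by
  -- choose functionals nonvanishing on both u j and w j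
  have hf : ∀ j : Fin m, ∃ f : (Fin 2 → ℂ) →ₗ[ℂ] ℂ, f (u j) ≠ 0 ∧ f (w j) ≠ 0 :=
    fun j => exists_dual_ne_zero _ _ (hu j) (hw j)
  choose f hfu hfw using hf
  -- dual bases at j₁ and j₂
  have hcard : Fintype.card (Fin 2) = Module.finrank ℂ (Fin 2 → ℂ) := by simp
  let B₁ := basisOfLinearIndependentOfCardEqFinrank h1 hcard
  let B₂ := basisOfLinearIndependentOfCardEqFinrank h2 hcard
  have hB₁0 : B₁ 0 = u j₁ := by
    simp [B₁, coe_basisOfLinearIndependentOfCardEqFinrank]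
  have hB₁1 : B₁ 1 = w j₁ := by
    simp [B₁, coe_basisOfLinearIndependentOfCardEqFinrank]
  have hB₂0 : B₂ 0 = u j₂ := by
    simp [B₂, coe_basisOfLinearIndependentOfCardEqFinrank]
  have hB₂1 : B₂ 1 = w j₂ := by
    simp [B₂, coe_basisOfLinearIndependentOfCardEqFinrank]
  set g : (Fin 2 → ℂ) →ₗ[ℂ] ℂ := B₁.coord 0 with hg
  set g' : (Fin 2 → ℂ) →ₗ[ℂ] ℂ := B₁.coord 1 with hg'
  set h : (Fin 2 → ℂ) →ₗ[ℂ] ℂ := B₂.coord 0 with hh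
  set h' : (Fin 2 → ℂ) →ₗ[ℂ] ℂ := B₂.coord 1 with hh'
  have hgu : g (u j₁) = 1 := by
    rw [hg, ← hB₁0]; simp [Module.Basis.coord_apply, Module.Basis.repr_self]
  have hgw : g (w j₁) = 0 := by
    rw [hg, ← hB₁1]; simp [Module.Basis.coord_apply, Module.Basis.repr_self,
      Finsupp.single_apply]
  have hg'u : g' (u j₁) = 0 := by
    rw [hg', ← hB₁0]; simp [Module.Basis.coord_apply, Module.Basis.repr_self,
      Finsupp.single_apply]
  have hg'w : g' (w j₁) = 1 := by
    rw [hg', ← hB₁1]; simp [Module.Basis.coord_apply, Module.Basis.repr_self]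
  have hhu : h (u j₂) = 1 := by
    rw [hh, ← hB₂0]; simp [Module.Basis.coord_apply, Module.Basis.repr_self]
  have hhw : h (w j₂) = 0 := by
    rw [hh, ← hB₂1]; simp [Module.Basis.coord_apply, Module.Basis.repr_self,
      Finsupp.single_apply]
  have hh'u : h' (u j₂) = 0 := by
    rw [hh', ← hB₂0]; simp [Module.Basis.coord_apply, Module.Basis.repr_self,
      Finsupp.single_apply]
  have hh'w : h' (w j₂) = 1 := by
    rw [hh', ← hB₂1]; simp [Module.Basis.coord_apply, Module.Basis.repr_self]
  -- the four families of functionals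
  set F₁ := Function.update (Function.update f j₁ g) j₂ h with hF₁
  set F₂ := Function.update (Function.update f j₁ g') j₂ h' with hF₂
  set F₃ := Function.update (Function.update f j₁ g) j₂ h' with hF₃
  set F₄ := Function.update (Function.update f j₁ g') j₂ h with hF₄
  obtain ⟨v, hv⟩ := hdec
  -- the rank-one identity on the pure tensor v
  have hrank : contract F₁ (⨂ₜ[ℂ] j, v j) * contract F₂ (⨂ₜ[ℂ] j, v j)
      = contract F₃ (⨂ₜ[ℂ] j, v j) * contract F₄ (⨂ₜ[ℂ] j, v j) := by
    rw [contract_tprod, contract_tprod, contract_tprod, contract_tprod,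
      ← Finset.prod_mul_distrib, ← Finset.prod_mul_distrib]
    refine Finset.prod_congr rfl fun i _ => ?_
    by_cases hi2 : i = j₂
    · subst hi2
      simp [hF₁, hF₂, hF₃, hF₄, mul_comm]
    · by_cases hi1 : i = j₁
      · subst hi1
        simp [hF₁, hF₂, hF₃, hF₄, Function.update_of_ne hi2]
      · simp [hF₁, hF₂, hF₃, hF₄, Function.update_of_ne hi2,
          Function.update_of_ne hi1]
  -- evaluate each contraction on U + W
  have e1u : contract F₁ (⨂ₜ[ℂ] j, u j) ≠ 0 := by
    rw [contract_tprod]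
    rw [Finset.prod_ne_zero_iff]
    intro i _
    by_cases hi2 : i = j₂
    · subst hi2; simp [hF₁, hhu]
    · by_cases hi1 : i = j₁
      · subst hi1; simp [hF₁, Function.update_of_ne hi2, hgu]
      · simpa [hF₁, Function.update_of_ne hi2, Function.update_of_ne hi1]
          using hfu i
  have e1w : contract F₁ (⨂ₜ[ℂ] j, w j) = 0 := by
    rw [contract_tprod]
    refine Finset.prod_eq_zero (Finset.mem_univ j₁) ?_
    simp [hF₁, Function.update_of_ne hne, hgw]
  have e2u : contract F₂ (⨂ₜ[ℂ] j, u j) = 0 := by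
    rw [contract_tprod]
    refine Finset.prod_eq_zero (Finset.mem_univ j₁) ?_
    simp [hF₂, Function.update_of_ne hne, hg'u]
  have e2w : contract F₂ (⨂ₜ[ℂ] j, w j) ≠ 0 := by
    rw [contract_tprod]
    rw [Finset.prod_ne_zero_iff]
    intro i _
    by_cases hi2 : i = j₂
    · subst hi2; simp [hF₂, hh'w]
    · by_cases hi1 : i = j₁
      · subst hi1; simp [hF₂, Function.update_of_ne hi2, hg'w]
      · simpa [hF₂, Function.update_of_ne hi2, Function.update_of_ne hi1]
          using hfw i
  have e3u : contract F₃ (⨂ₜ[ℂ] j, u j) = 0 := by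
    rw [contract_tprod]
    refine Finset.prod_eq_zero (Finset.mem_univ j₂) ?_
    simp [hF₃, hh'u]
  have e3w : contract F₃ (⨂ₜ[ℂ] j, w j) = 0 := by
    rw [contract_tprod]
    refine Finset.prod_eq_zero (Finset.mem_univ j₁) ?_
    simp [hF₃, Function.update_of_ne hne, hgw]
  have e4u : contract F₄ (⨂ₜ[ℂ] j, u j) = 0 := by
    rw [contract_tprod]
    refine Finset.prod_eq_zero (Finset.mem_univ j₁) ?_
    simp [hF₄, Function.update_of_ne hne, hg'u]
  have e4w : contract F₄ (⨂ₜ[ℂ] j, w j) = 0 := by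
    rw [contract_tprod]
    refine Finset.prod_eq_zero (Finset.mem_univ j₂) ?_
    simp [hF₄, hhw]
  rw [← hv] at hrank
  simp only [map_add, e1w, e2u, e3u, e3w, e4u, e4w, add_zero, zero_add] at hrank
  exact mul_ne_zero e1u e2w (by simpa using hrank)

/-- A line contained in the Segre variety of `(ℙ¹)^m` is a ruling: it is obtained by
varying the vector in exactly one tensor factor. -/
theorem lines_in_binary_segre_are_rulings
    (m : ℕ) (hm : 2 ≤ m) (u w : Fin m → Fin 2 → ℂ)
    (hindep : LinearIndependent ℂ ![(⨂ₜ[ℂ] j, u j : BinTensor m), ⨂ₜ[ℂ] j, w j])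
    (hdec : ∀ a b : ℂ,
      Decomposable (a • (⨂ₜ[ℂ] j, u j : BinTensor m) + b • ⨂ₜ[ℂ] j, w j)) :
    ∃ j₀ : Fin m, ∀ j : Fin m, j ≠ j₀ → ¬ LinearIndependent ℂ ![u j, w j] := by
  have hU : (⨂ₜ[ℂ] j, u j : BinTensor m) ≠ 0 := by
    have := hindep.ne_zero 0; simpa using this
  have hW : (⨂ₜ[ℂ] j, w j : BinTensor m) ≠ 0 := by
    have := hindep.ne_zero 1; simpa using this
  have hu : ∀ j, u j ≠ 0 := by
    intro j hj
    exact hU ((PiTensorProduct.tprod ℂ).map_coord_zero j hj)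
  have hw : ∀ j, w j ≠ 0 := by
    intro j hj
    exact hW ((PiTensorProduct.tprod ℂ).map_coord_zero j hj)
  have hdec1 : Decomposable ((⨂ₜ[ℂ] j, u j : BinTensor m) + ⨂ₜ[ℂ] j, w j) := by
    have := hdec 1 1; simpa using this
  by_cases hex : ∃ j, LinearIndependent ℂ ![u j, w j]
  · obtain ⟨j₀, hj₀⟩ := hex
    refine ⟨j₀, fun j hj hcon => ?_⟩
    exact key u w j j₀ hj hu hw hcon hj₀ hdec1
  · refine ⟨⟨0, by omega⟩, fun j _ hcon => hex ⟨j, hcon⟩⟩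
end

section
/- Let F ∈ ℂ[x, y, z] be a homogeneous polynomial of degree 3, and let P, Q ∈ ℂ³ ∖ {0} be non-proportional vectors (two distinct points of ℙ²) such that F and all three first-order partial derivatives of F vanish at P and at Q (i.e. F is singular at both points). Then F is divisible by a nonzero linear form L vanishing at P and at Q: there exists a homogeneous polynomial C of degree 2 with C(P) = C(Q) = 0 such that F = L·C. -/
/-!
An invertible linear substitution moves `P` and `Q` to the coordinate points `e₀` and `e₁`.
A form of degree `n + 1` all of whose partial derivatives vanish at `eᵢ` has no monomial of
`xᵢ`-degree `≥ n`. For the transformed cubic `G` this forces every monomial to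
contain `x₂`, so `G = x₂ · D`; at `e₀` and `e₁`, where `x₂ = 0`, the product rule gives
`D = ∂G/∂x₂ = 0`. Substituting back, `F` is the product of a line and a conic through `P`, `Q`.
-/

open MvPolynomial Matrix

theorem Finsupp.exists_eq_single_add_single_one {σ : Type*} {d : σ →₀ ℕ} {i : σ} {n : ℕ}
    (hd : d.degree = n + 1) (hi : n ≤ d i) : ∃ j, d = single i n + single j 1 := by
  have hle : single i n ≤ d := single_le_iff.mpr hi
  have hdeg : (d - single i n).degree = 1 := by
    have := congrArg degree (tsub_add_cancel_of_le hle)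
    rw [map_add, degree_single, hd] at this
    omega
  obtain ⟨j, hj⟩ := (Set.ext_iff.mp range_single_one (d - single i n)).mpr hdeg
  exact ⟨j, by rw [show single j 1 = d - single i n from hj, add_tsub_cancel_of_le hle]⟩

namespace MvPolynomial

section CommSemiring

variable {R σ τ : Type*} [CommSemiring R]

theorem pderiv_bind₁ [Fintype σ] (f : σ → MvPolynomial τ R) (p : MvPolynomial σ R) (j : τ) :
    pderiv j (bind₁ f p) = ∑ i, bind₁ f (pderiv i p) * pderiv j (f i) := by
  classical
  induction p using MvPolynomial.induction_on with
  | C a => simp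
  | add p q hp hq => simp only [map_add, hp, hq, add_mul, Finset.sum_add_distrib]
  | mul_X p k hp =>
    simp only [map_mul, pderiv_mul, bind₁_X_right, hp, pderiv_X, Pi.single_apply, map_add,
      mul_ite, mul_one, mul_zero, apply_ite (bind₁ f), map_zero, add_mul, ite_mul, zero_mul,
      Finset.sum_add_distrib, Finset.sum_ite_eq, Finset.mem_univ, if_true, Finset.sum_mul]
    simp only [mul_right_comm _ (f k)]

theorem IsHomogeneous.eval_piSingle_one [DecidableEq σ] {p : MvPolynomial σ R} {n : ℕ}
    (hp : p.IsHomogeneous n) (i : σ) :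
    eval (Pi.single i 1) p = coeff (Finsupp.single i n) p := by
  rw [eval_eq, Finset.sum_eq_single (Finsupp.single i n)]
  · rw [Finset.prod_eq_one, mul_one]
    intro k hk
    rw [Finset.mem_singleton.mp (Finsupp.support_single_subset hk)]
    simp
  · intro d hd hne
    obtain ⟨k, hk, hki⟩ : ∃ k ∈ d.support, k ≠ i := by
      by_contra! h
      obtain ⟨b, rfl⟩ := Finsupp.support_subset_singleton'.mp fun k hk =>
        Finset.mem_singleton.mpr (h k hk)
      rw [hp.degree_eq_sum_deg_support hd, ← Finsupp.degree_apply, Finsupp.degree_single] at hne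
      exact hne rfl
    rw [Finset.prod_eq_zero hk (by rw [Pi.single_eq_of_ne hki, zero_pow (by simpa using hk)]),
      mul_zero]
  · intro h
    rw [notMem_support_iff.mp h, zero_mul]

theorem X_dvd_of_forall_mem_support {p : MvPolynomial σ R} {i : σ}
    (h : ∀ d ∈ p.support, d i ≠ 0) : X i ∣ p := by
  rw [← Ideal.mem_span_singleton, ← Set.image_singleton, mem_ideal_span_X_image]
  exact fun d hd => ⟨i, rfl, h d hd⟩

theorem IsHomogeneous.of_X_mul {p : MvPolynomial σ R} {i : σ} {n : ℕ}
    (h : (X i * p).IsHomogeneous (n + 1)) : p.IsHomogeneous n := by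
  intro d hd
  have := h (d := Finsupp.single i 1 + d) (by rwa [coeff_X_mul])
  rw [map_add, Finsupp.weight_single, Pi.one_apply, smul_eq_mul, mul_one, add_comm] at this
  exact Nat.add_right_cancel this

section LinearSubst

variable [Fintype σ]

noncomputable def linearSubst (N : Matrix σ σ R) : MvPolynomial σ R →ₐ[R] MvPolynomial σ R :=
  bind₁ fun i => ∑ j, C (N i j) * X j

theorem linearSubst_X (N : Matrix σ σ R) (i : σ) :
    linearSubst N (X i) = ∑ j, C (N i j) * X j :=
  bind₁_X_right _ _

theorem eval_linearSubst (N : Matrix σ σ R) (v : σ → R) (p : MvPolynomial σ R) :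
    eval v (linearSubst N p) = eval (N *ᵥ v) p := by
  simp only [linearSubst, eval, eval₂Hom_bind₁]
  congr 2
  funext i
  simp [mulVec, dotProduct]

theorem linearSubst_linearSubst (N N' : Matrix σ σ R) (p : MvPolynomial σ R) :
    linearSubst N (linearSubst N' p) = linearSubst (N' * N) p := by
  rw [← AlgHom.comp_apply]
  congr 1
  refine algHom_ext fun i => ?_
  rw [AlgHom.comp_apply, linearSubst_X, linearSubst_X, map_sum]
  simp only [map_mul, algHom_C, algebraMap_eq, linearSubst_X, Finset.mul_sum, mul_apply, map_sum,
    Finset.sum_mul, mul_assoc]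
  exact Finset.sum_comm

theorem linearSubst_one [DecidableEq σ] (p : MvPolynomial σ R) : linearSubst 1 p = p := by
  rw [← AlgHom.id_apply (R := R) p, ← AlgHom.comp_apply]
  congr 1
  refine algHom_ext fun i => ?_
  simp [linearSubst_X, one_apply]

theorem IsHomogeneous.linearSubst {p : MvPolynomial σ R} {n : ℕ} (hp : p.IsHomogeneous n)
    (N : Matrix σ σ R) : (linearSubst N p).IsHomogeneous n := by
  rw [← one_mul n]
  exact hp.aeval _ fun i => IsHomogeneous.sum _ _ _ fun j _ => isHomogeneous_C_mul_X (N i j) j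

theorem eval_pderiv_linearSubst (N : Matrix σ σ R) (v : σ → R) (p : MvPolynomial σ R) (j : σ) :
    eval v (pderiv j (linearSubst N p)) = ∑ i, eval (N *ᵥ v) (pderiv i p) * N i j := by
  classical
  simp [linearSubst, pderiv_bind₁, pderiv_X, Pi.single_apply, ← eval_linearSubst]

end LinearSubst

end CommSemiring

theorem IsHomogeneous.apply_lt_of_eval_pderiv_eq_zero {R σ : Type*} [CommRing R]
    [NoZeroDivisors R] [CharZero R] [DecidableEq σ] {p : MvPolynomial σ R} {n : ℕ}
    (hp : p.IsHomogeneous (n + 1)) {i : σ} (hi : ∀ j, eval (Pi.single i 1) (pderiv j p) = 0)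
    {d : σ →₀ ℕ} (hd : d ∈ p.support) : d i < n := by
  by_contra! hn
  -- `d = xᵢⁿ xⱼ` and `∂ⱼ p (eᵢ) = d j • coeff d p`, with `d j ≠ 0` in characteristic zero.
  obtain ⟨j, rfl⟩ :=
    Finsupp.exists_eq_single_add_single_one (hp.degree_eq_sum_deg_support hd).symm hn
  have h := (hp.pderiv (i := j)).eval_piSingle_one i
  rw [Nat.add_sub_cancel, hi j, coeff_pderiv] at h
  exact mul_ne_zero (mem_support_iff.mp hd) (Nat.cast_add_one_ne_zero _) h.symm

end MvPolynomial

theorem exists_isUnit_det_mulVec_single_eq {K : Type*} [Field K] {P Q : Fin 3 → K}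
    (h : LinearIndependent K ![P, Q]) : ∃ M : Matrix (Fin 3) (Fin 3) K,
      IsUnit M.det ∧ M *ᵥ Pi.single 0 1 = P ∧ M *ᵥ Pi.single 1 1 = Q := by
  obtain ⟨R, hR⟩ := exists_linearIndependent_snoc_of_lt_finrank h (by simp)
  refine ⟨(of (Fin.snoc ![P, Q] R))ᵀ, ?_, ?_, ?_⟩
  · rwa [← isUnit_iff_isUnit_det, ← linearIndependent_cols_iff_isUnit]
  · rw [mulVec_single_one]; rfl
  · rw [mulVec_single_one]; rfl

theorem exists_eq_X_two_mul_of_eval_pderiv_eq_zero {K : Type*} [Field K] [CharZero K]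
    {G : MvPolynomial (Fin 3) K} (hG : G.IsHomogeneous 3)
    (hG0 : ∀ j, eval (Pi.single 0 1) (pderiv j G) = 0)
    (hG1 : ∀ j, eval (Pi.single 1 1) (pderiv j G) = 0) :
    ∃ D : MvPolynomial (Fin 3) K, D.IsHomogeneous 2 ∧ eval (Pi.single 0 1) D = 0 ∧
      eval (Pi.single 1 1) D = 0 ∧ G = X 2 * D := by
  obtain ⟨D, hGD⟩ : X 2 ∣ G := X_dvd_of_forall_mem_support fun d hd => by
    have h0 := hG.apply_lt_of_eval_pderiv_eq_zero hG0 hd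
    have h1 := hG.apply_lt_of_eval_pderiv_eq_zero hG1 hd
    have h3 := hG.degree_eq_sum_deg_support hd
    rw [← Finsupp.degree_apply, Finsupp.degree_eq_sum, Fin.sum_univ_three] at h3
    omega
  refine ⟨D, (hGD ▸ hG).of_X_mul, ?_, ?_, hGD⟩
  · simpa [hGD, pderiv_mul] using hG0 2
  · simpa [hGD, pderiv_mul] using hG1 2

theorem cubic_singular_at_two_points_splits_general
    (F : MvPolynomial (Fin 3) ℂ) (hF : F.IsHomogeneous 3)
    (P Q : Fin 3 → ℂ) (hP : P ≠ 0)
    (hPQ : ∀ c : ℂ, Q ≠ c • P)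
    (hdP : ∀ i : Fin 3, eval P (pderiv i F) = 0)
    (hdQ : ∀ i : Fin 3, eval Q (pderiv i F) = 0) :
    ∃ L C : MvPolynomial (Fin 3) ℂ,
      L.IsHomogeneous 1 ∧ L ≠ 0 ∧ eval P L = 0 ∧ eval Q L = 0 ∧
      C.IsHomogeneous 2 ∧ eval P C = 0 ∧ eval Q C = 0 ∧ F = L * C := by
  obtain ⟨M, hM, hMP, hMQ⟩ := exists_isUnit_det_mulVec_single_eq
    ((LinearIndependent.pair_iff' hP).mpr fun c => (hPQ c).symm)
  set G := linearSubst M F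
  have hG : G.IsHomogeneous 3 := hF.linearSubst M
  have hG0 : ∀ j, eval (Pi.single 0 1) (pderiv j G) = 0 := fun j => by
    simp [G, eval_pderiv_linearSubst, hMP, hdP]
  have hG1 : ∀ j, eval (Pi.single 1 1) (pderiv j G) = 0 := fun j => by
    simp [G, eval_pderiv_linearSubst, hMQ, hdQ]
  obtain ⟨D, hD, hD0, hD1, hGD⟩ := exists_eq_X_two_mul_of_eval_pderiv_eq_zero hG hG0 hG1
  have hinv : ∀ v, M⁻¹ *ᵥ (M *ᵥ v) = v := fun v => by
    rw [mulVec_mulVec, nonsing_inv_mul _ hM, one_mulVec]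
  refine ⟨linearSubst M⁻¹ (X 2), linearSubst M⁻¹ D, (isHomogeneous_X ℂ 2).linearSubst _, ?_,
    ?_, ?_, hD.linearSubst _, ?_, ?_, ?_⟩
  · intro hL
    have := congrArg (linearSubst M) hL
    rw [linearSubst_linearSubst, nonsing_inv_mul _ hM, linearSubst_one, map_zero] at this
    exact X_ne_zero 2 this
  · rw [eval_linearSubst, ← hMP, hinv, eval_X, Pi.single_eq_of_ne (by decide)]
  · rw [eval_linearSubst, ← hMQ, hinv, eval_X, Pi.single_eq_of_ne (by decide)]
  · rw [eval_linearSubst, ← hMP, hinv, hD0]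
  · rw [eval_linearSubst, ← hMQ, hinv, hD1]
  · rw [← map_mul, ← hGD, linearSubst_linearSubst, mul_nonsing_inv _ hM, linearSubst_one]

/-- A plane cubic which is singular at two distinct points of `ℙ²` splits as the
union of the line through the two points and a conic through them. -/
theorem cubic_singular_at_two_points_splits
    (F : MvPolynomial (Fin 3) ℂ) (hF : F.IsHomogeneous 3)
    (P Q : Fin 3 → ℂ) (hP : P ≠ 0) (hQ : Q ≠ 0)
    (hPQ : ∀ c : ℂ, Q ≠ c • P)
    (hFP : eval P F = 0) (hFQ : eval Q F = 0)
    (hdP : ∀ i : Fin 3, eval P (pderiv i F) = 0)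
    (hdQ : ∀ i : Fin 3, eval Q (pderiv i F) = 0) :
    ∃ L C : MvPolynomial (Fin 3) ℂ,
      L.IsHomogeneous 1 ∧ L ≠ 0 ∧ eval P L = 0 ∧ eval Q L = 0 ∧
      C.IsHomogeneous 2 ∧ eval P C = 0 ∧ eval Q C = 0 ∧ F = L * C :=
  cubic_singular_at_two_points_splits_general F hF P Q hP hPQ hdP hdQ
end

section
/- Generic tensors of rank 2 in ℂ² ⊗ ℂ² ⊗ ℂ³ are identifiable: there exists a nonzero polynomial P on the parameter space (ℂ² × ℂ² × ℂ³)² such that for every parameter (a_0, b_0, c_0, a_1, b_1, c_1) with P ≠ 0, every multiset of 2 nonzero decomposable tensors in ℂ² ⊗ ℂ² ⊗ ℂ³ whose sum equals T = a_0 ⊗ b_0 ⊗ c_0 + a_1 ⊗ b_1 ⊗ c_1 equals the multiset { a_0 ⊗ b_0 ⊗ c_0, a_1 ⊗ b_1 ⊗ c_1 }. -/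
open scoped TensorProduct

/-- The triple tensor product `ℂ² ⊗ ℂ² ⊗ ℂ³`, the affine cone over the Segre
embedding of `ℙ¹ × ℙ¹ × ℙ²` in `ℙ¹¹`. -/
abbrev TripleTensor := (Fin 2 → ℂ) ⊗[ℂ] ((Fin 2 → ℂ) ⊗[ℂ] (Fin 3 → ℂ))

/-- A tensor in `ℂ² ⊗ ℂ² ⊗ ℂ³` is decomposable if it is a pure tensor `a ⊗ b ⊗ c`. -/
def TripleDecomposable (t : TripleTensor) : Prop :=
  ∃ (a b : Fin 2 → ℂ) (c : Fin 3 → ℂ), t = a ⊗ₜ[ℂ] (b ⊗ₜ[ℂ] c)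

/-!
Contracting the third factor of `∑ᵢ aᵢ ⊗ bᵢ ⊗ cᵢ` against `φ` gives the 2×2 slice
`aᵀ * diagonal (c *ᵥ φ) * b`, of determinant `det a * det b * ∏ᵢ (c *ᵥ φ)ᵢ`. For a second
decomposition `∑ᵢ Xᵢ ⊗ Yᵢ ⊗ Zᵢ` of the same tensor, put `φ = d *ᵥ v` with `c * d = 1`: the
binary quadratic form `∏ᵢ ((Z * d) *ᵥ v)ᵢ` is then a nonzero multiple of `v₀ v₁`, so `Z * d`
is a monomial matrix, with some permutation `σ`. The slice at `v = eⱼ` shows that `Xᵢ ⊗ Yᵢ`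
is a multiple of `a_{σ i} ⊗ b_{σ i}`; as the matrices `aⱼ ⊗ bⱼ` are linearly independent when
`a` and `b` are invertible, comparing all slices makes `Zᵢ` the matching multiple of `c_{σ i}`.
Genericity is the nonvanishing of `det a`, `det b` and of one 2×2 minor of `c`.
-/

open Matrix

variable {K : Type*} [Field K]

section Pencil

variable {ι m n : Type*} [Fintype ι] [DecidableEq ι]

theorem Matrix.transpose_mul_diagonal_mul_eq_sum (a : Matrix ι m K) (b : Matrix ι n K)
    (s : ι → K) : aᵀ * diagonal s * b = ∑ i, s i • vecMulVec (a i) (b i) := by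
  ext p q
  rw [mul_apply]
  simp only [mul_diagonal, transpose_apply, sum_apply, smul_apply, vecMulVec_apply, smul_eq_mul]
  exact Finset.sum_congr rfl fun i _ => by ring

theorem Matrix.det_transpose_mul_diagonal_mul (a b : Matrix ι ι K) (s : ι → K) :
    (aᵀ * diagonal s * b).det = a.det * b.det * ∏ i, s i := by
  rw [det_mul, det_mul, det_transpose, det_diagonal]
  ring

theorem Matrix.eq_of_transpose_mul_diagonal_mul_eq {a b : Matrix ι ι K} (ha : IsUnit a.det)
    (hb : IsUnit b.det) {s t : ι → K} (h : aᵀ * diagonal s * b = aᵀ * diagonal t * b) :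
    s = t := by
  have ha' : IsUnit aᵀ := (isUnit_iff_isUnit_det _).2 (by rwa [det_transpose])
  have hb' : IsUnit b := (isUnit_iff_isUnit_det _).2 hb
  exact diagonal_injective (ha'.mul_left_cancel (hb'.mul_right_cancel h))

theorem Matrix.row_ne_zero_of_isUnit_det {a : Matrix ι ι K} (ha : IsUnit a.det) (i : ι) :
    a i ≠ 0 :=
  fun h => ha.ne_zero (det_eq_zero_of_row_eq_zero i fun j => congrFun h j)

theorem Matrix.exists_mul_eq_one_of_isUnit_det_submatrix {ν : Type*} [Fintype ν] [DecidableEq ν]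
    (c : Matrix ι ν K) (e : ι → ν) (hc : IsUnit (c.submatrix id e).det) :
    ∃ d : Matrix ν ι K, c * d = 1 := by
  refine ⟨(1 : Matrix ν ν K).submatrix id e * (c.submatrix id e)⁻¹, ?_⟩
  have hce : c * (1 : Matrix ν ν K).submatrix id e = c.submatrix id e := by
    ext
    simp [mul_apply, one_apply]
  rw [← Matrix.mul_assoc, hce, mul_nonsing_inv _ hc]

end Pencil

theorem Matrix.exists_perm_of_mul_prod_mulVec_eq (w : Matrix (Fin 2) (Fin 2) K) {α β : K}
    (hβ : β ≠ 0) (h : ∀ v, α * ∏ i, (w *ᵥ v) i = β * ∏ i, v i) :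
    ∃ σ : Equiv.Perm (Fin 2), ∀ i j, j ≠ σ i → w i j = 0 := by
  have hrow : α * ((w 0 0 + w 0 1) * (w 1 0 + w 1 1)) = β := by
    simpa [mulVec, dotProduct, Fin.sum_univ_two, Fin.prod_univ_two] using h 1
  have hcol (j : Fin 2) : α * (w 0 j * w 1 j) = 0 := by
    have := h (Pi.single j 1)
    fin_cases j <;> simpa [Fin.prod_univ_two] using this
  obtain ⟨hα, hrow₀, hrow₁⟩ : α ≠ 0 ∧ w 0 0 + w 0 1 ≠ 0 ∧ w 1 0 + w 1 1 ≠ 0 := by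
    simpa [← hrow, not_or] using hβ
  have hcol₀ := (mul_eq_zero.1 (hcol 0)).resolve_left hα
  have hcol₁ := (mul_eq_zero.1 (hcol 1)).resolve_left hα
  by_cases h₀₀ : w 0 0 = 0
  · refine ⟨Equiv.swap 0 1, fun i j hij => ?_⟩
    fin_cases i <;> fin_cases j <;> simp_all
  · refine ⟨1, fun i j hij => ?_⟩
    fin_cases i <;> fin_cases j <;> simp_all

section Identifiability

variable {ι ν : Type*} [Fintype ι] [DecidableEq ι] [Fintype ν] [DecidableEq ν]

theorem smul_vecMulVec_eq_of_mul_eq_zero_off_perm {a b X Y : Matrix ι ι K} {c Z : Matrix ι ν K}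
    {d : Matrix ν ι K} (ha : IsUnit a.det) (hb : IsUnit b.det) (hcd : c * d = 1)
    (h : ∀ φ, Xᵀ * diagonal (Z *ᵥ φ) * Y = aᵀ * diagonal (c *ᵥ φ) * b)
    (σ : Equiv.Perm ι) (hσ : ∀ i j, j ≠ σ i → (Z * d) i j = 0) (i : ι) (k : ν) :
    Z i k • vecMulVec (X i) (Y i) = c (σ i) k • vecMulVec (a (σ i)) (b (σ i)) := by
  set t : ι → K := fun i => (Z * d) i (σ i)
  have hcol (i : ι) : Z *ᵥ (d *ᵥ Pi.single (σ i) 1) = Pi.single i (t i) := by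
    ext i'
    rw [mulVec_mulVec, mulVec_single_one]
    by_cases hi : i' = i
    · subst hi
      simp [t]
    · simp [hi, hσ i' (σ i) (σ.injective.ne (Ne.symm hi))]
  have hterm (i : ι) : t i • vecMulVec (X i) (Y i) = vecMulVec (a (σ i)) (b (σ i)) := by
    have := h (d *ᵥ Pi.single (σ i) 1)
    rw [hcol, mulVec_mulVec, hcd, one_mulVec, transpose_mul_diagonal_mul_eq_sum,
      transpose_mul_diagonal_mul_eq_sum] at this
    simpa [Pi.single_apply] using this
  have ht (i : ι) : t i ≠ 0 := by
    intro h0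
    have := hterm i
    rw [h0, zero_smul, eq_comm, vecMulVec_eq_zero] at this
    exact this.elim (row_ne_zero_of_isUnit_det ha _) (row_ne_zero_of_isUnit_det hb _)
  have hZ : (fun j => Z (σ.symm j) k / t (σ.symm j)) = c.col k := by
    apply eq_of_transpose_mul_diagonal_mul_eq ha hb
    have := h (Pi.single k 1)
    rw [mulVec_single_one, mulVec_single_one, transpose_mul_diagonal_mul_eq_sum] at this
    rw [← this, transpose_mul_diagonal_mul_eq_sum, ← Equiv.sum_comp σ]
    refine Finset.sum_congr rfl fun i _ => ?_
    simp only [Equiv.symm_apply_apply, col_apply, ← hterm, smul_smul, div_mul_cancel₀ _ (ht i)]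
  have hZi : Z i k = t i * c (σ i) k := by
    have := congrFun hZ (σ i)
    simp only [Equiv.symm_apply_apply, col_apply] at this
    rw [← this, mul_div_cancel₀ _ (ht i)]
  rw [hZi, mul_comm, mul_smul, hterm]

theorem exists_perm_smul_vecMulVec_eq {a b X Y : Matrix (Fin 2) (Fin 2) K}
    {c Z : Matrix (Fin 2) ν K} {d : Matrix ν (Fin 2) K} (ha : IsUnit a.det) (hb : IsUnit b.det)
    (hcd : c * d = 1) (h : ∀ φ, Xᵀ * diagonal (Z *ᵥ φ) * Y = aᵀ * diagonal (c *ᵥ φ) * b) :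
    ∃ σ : Equiv.Perm (Fin 2), ∀ i k,
      Z i k • vecMulVec (X i) (Y i) = c (σ i) k • vecMulVec (a (σ i)) (b (σ i)) := by
  obtain ⟨σ, hσ⟩ := exists_perm_of_mul_prod_mulVec_eq (Z * d) (α := X.det * Y.det)
    (mul_ne_zero ha.ne_zero hb.ne_zero) fun v => by
      have := congrArg det (h (d *ᵥ v))
      rwa [det_transpose_mul_diagonal_mul, det_transpose_mul_diagonal_mul, mulVec_mulVec,
        mulVec_mulVec, hcd, one_mulVec] at this
  exact ⟨σ, smul_vecMulVec_eq_of_mul_eq_zero_off_perm ha hb hcd h σ hσ⟩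

end Identifiability

section TripleCoords

variable (K) (m n ν : Type*) [Fintype m] [Fintype n] [Fintype ν]

noncomputable def tripleCoords : (m → K) ⊗[K] ((n → K) ⊗[K] (ν → K)) ≃ₗ[K] (m × n × ν → K) :=
  ((Pi.basisFun K m).tensorProduct ((Pi.basisFun K n).tensorProduct (Pi.basisFun K ν))).equivFun

variable {K m n ν}

@[simp]
theorem tripleCoords_tmul (u : m → K) (v : n → K) (w : ν → K) (p : m) (q : n) (k : ν) :
    tripleCoords K m n ν (u ⊗ₜ (v ⊗ₜ w)) (p, q, k) = u p * (v q * w k) := by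
  simp only [tripleCoords, Module.Basis.equivFun_apply, Module.Basis.tensorProduct_repr_tmul_apply,
    Pi.basisFun_repr, smul_eq_mul]
  ring

theorem Matrix.transpose_mul_diagonal_mulVec_mul_apply {ι : Type*} [Fintype ι] [DecidableEq ι]
    (X : Matrix ι m K) (Y : Matrix ι n K) (Z : Matrix ι ν K) (φ : ν → K) (p : m) (q : n) :
    (Xᵀ * diagonal (Z *ᵥ φ) * Y) p q =
      ∑ k, φ k * tripleCoords K m n ν (∑ i, X i ⊗ₜ (Y i ⊗ₜ Z i)) (p, q, k) := by
  simp only [transpose_mul_diagonal_mul_eq_sum, mulVec, dotProduct, sum_apply, smul_apply,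
    vecMulVec_apply, smul_eq_mul, Finset.sum_mul, map_sum, Finset.sum_apply, tripleCoords_tmul,
    Finset.mul_sum]
  rw [Finset.sum_comm]
  exact Finset.sum_congr rfl fun i _ => Finset.sum_congr rfl fun k _ => by ring

end TripleCoords

theorem exists_perm_tmul_tmul_eq {ν : Type*} [Fintype ν] [DecidableEq ν]
    {a b X Y : Matrix (Fin 2) (Fin 2) K} {c Z : Matrix (Fin 2) ν K} {d : Matrix ν (Fin 2) K}
    (ha : IsUnit a.det) (hb : IsUnit b.det) (hcd : c * d = 1)
    (h : ∑ i, X i ⊗ₜ[K] (Y i ⊗ₜ[K] Z i) = ∑ i, a i ⊗ₜ[K] (b i ⊗ₜ[K] c i)) :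
    ∃ σ : Equiv.Perm (Fin 2), ∀ i,
      X i ⊗ₜ[K] (Y i ⊗ₜ[K] Z i) = a (σ i) ⊗ₜ[K] (b (σ i) ⊗ₜ[K] c (σ i)) := by
  have hslices (φ : ν → K) : Xᵀ * diagonal (Z *ᵥ φ) * Y = aᵀ * diagonal (c *ᵥ φ) * b := by
    ext p q
    rw [transpose_mul_diagonal_mulVec_mul_apply, transpose_mul_diagonal_mulVec_mul_apply, h]
  obtain ⟨σ, hσ⟩ := exists_perm_smul_vecMulVec_eq ha hb hcd hslices
  refine ⟨σ, fun i => (tripleCoords K _ _ _).injective (funext fun ⟨p, q, k⟩ => ?_)⟩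
  simpa [vecMulVec_apply, mul_comm, mul_left_comm] using congrFun₂ (hσ i k) p q

theorem Multiset.pair_eq_pair_of_perm {α : Type*} {f g : Fin 2 → α} (σ : Equiv.Perm (Fin 2))
    (h : ∀ i, f i = g (σ i)) : ({f 0, f 1} : Multiset α) = {g 0, g 1} := by
  have : Finset.univ.val.map f = Finset.univ.val.map g := by
    rw [funext h, ← Function.comp_def, ← Multiset.map_map, Multiset.map_univ_val_equiv]
  exact Multiset.coe_eq_coe.2 (by simpa using this)

noncomputable def leadingMinorProduct : MvPolynomial (Fin 2 × (Fin 2 ⊕ Fin 2 ⊕ Fin 3)) ℂ :=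
  (Matrix.of fun i j => MvPolynomial.X (i, Sum.inl j)).det *
    (Matrix.of fun i j => MvPolynomial.X (i, Sum.inr (Sum.inl j))).det *
    (Matrix.of fun i (j : Fin 2) => MvPolynomial.X (i, Sum.inr (Sum.inr j.castSucc))).det

theorem eval_leadingMinorProduct (a b : Matrix (Fin 2) (Fin 2) ℂ) (c : Matrix (Fin 2) (Fin 3) ℂ) :
    MvPolynomial.eval (fun p => Sum.elim (a p.1) (Sum.elim (b p.1) (c p.1)) p.2)
        leadingMinorProduct = a.det * b.det * (c.submatrix id Fin.castSucc).det := by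
  simp only [leadingMinorProduct, map_mul, RingHom.map_det]
  refine congrArg₂ (· * ·) (congrArg₂ (· * ·) ?_ ?_) ?_ <;> congr 1 <;> ext <;> simp

theorem leadingMinorProduct_ne_zero : leadingMinorProduct ≠ 0 := by
  intro h
  have := eval_leadingMinorProduct 1 1 ((1 : Matrix (Fin 3) (Fin 3) ℂ).submatrix Fin.castSucc id)
  simp [h, submatrix_one _ (Fin.castSucc_injective 2)] at this

theorem generic_rank_two_identifiable_P1_P1_P2 :
    ∃ P : MvPolynomial (Fin 2 × (Fin 2 ⊕ Fin 2 ⊕ Fin 3)) ℂ, P ≠ 0 ∧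
      ∀ (a b : Fin 2 → Fin 2 → ℂ) (c : Fin 2 → Fin 3 → ℂ),
        MvPolynomial.eval
          (fun p => Sum.elim (a p.1) (Sum.elim (b p.1) (c p.1)) p.2) P ≠ 0 →
        ∀ D : Multiset TripleTensor,
          (Multiset.card D = 2 ∧ (∀ t ∈ D, t ≠ 0 ∧ TripleDecomposable t) ∧
            D.sum = ∑ i : Fin 2, a i ⊗ₜ[ℂ] (b i ⊗ₜ[ℂ] c i)) →
          D = {a 0 ⊗ₜ[ℂ] (b 0 ⊗ₜ[ℂ] c 0), a 1 ⊗ₜ[ℂ] (b 1 ⊗ₜ[ℂ] c 1)} := by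
  refine ⟨leadingMinorProduct, leadingMinorProduct_ne_zero,
    fun a b c hP D ⟨hcard, hdec, hsum⟩ => ?_⟩
  rw [eval_leadingMinorProduct a b c] at hP
  obtain ⟨⟨ha, hb⟩, hc⟩ := mul_ne_zero_iff.1 hP |>.imp_left mul_ne_zero_iff.1
  obtain ⟨d, hcd⟩ := exists_mul_eq_one_of_isUnit_det_submatrix c Fin.castSucc hc.isUnit
  obtain ⟨t₀, t₁, rfl⟩ := Multiset.card_eq_two.1 hcard
  obtain ⟨x₀, y₀, z₀, rfl⟩ := (hdec t₀ (by simp)).2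
  obtain ⟨x₁, y₁, z₁, rfl⟩ := (hdec t₁ (by simp)).2
  obtain ⟨σ, hσ⟩ := exists_perm_tmul_tmul_eq (X := ![x₀, x₁]) (Y := ![y₀, y₁]) (Z := ![z₀, z₁])
    ha.isUnit hb.isUnit hcd (by simpa [Fin.sum_univ_two] using hsum)
  exact Multiset.pair_eq_pair_of_perm (g := fun i => a i ⊗ₜ[ℂ] (b i ⊗ₜ[ℂ] c i)) σ hσ
end
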